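/- arXiv:2101.00444 — 2 statements merged into one kernel-verified Lean document; each statement's English description precedes it below -/
import Mathlib

section
/- Let λ_1, …, λ_n be pairwise distinct real numbers and let S be the n×n Vandermonde matrix with entries S_{ij} = λ_i^{n-j}. Then S is invertible and its inverse is given by (S^{-1})_{ij} = -(1/Δ_j) ∂ρ_i/∂λ_j, where ρ_i = (-1)^i σ_i(λ₁,…,λ_n) is (-1)^i times the i-th elementary symmetric polynomial, and Δ_j = ∏_{k≠j} (λ_j - λ_k). -/
/-- The `i`-th elementary symmetric polynomial `σ_i(λ₁,…,λ_n)`. -/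
noncomputable def esymmF (n i : ℕ) (l : Fin n → ℝ) : ℝ :=
  ∑ s ∈ Finset.powersetCard i Finset.univ, ∏ j ∈ s, l j

/-- `ρ_i = (-1)^i σ_i(λ)`. -/
noncomputable def rho (n i : ℕ) (l : Fin n → ℝ) : ℝ :=
  (-1) ^ i * esymmF n i l

/-- Partial derivative `∂f/∂λ_j` evaluated at `l`. -/
noncomputable def pd (n : ℕ) (f : (Fin n → ℝ) → ℝ) (l : Fin n → ℝ) (j : Fin n) : ℝ :=
  deriv (fun t => f (Function.update l j t)) (l j)

/-- `Δ_j = ∏_{k≠j} (λ_j - λ_k)`. -/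
noncomputable def Delta (n : ℕ) (l : Fin n → ℝ) (j : Fin n) : ℝ :=
  ∏ k ∈ Finset.univ.erase j, (l j - l k)

open Finset

lemma prod_neg_aux (n : ℕ) (l : Fin n → ℝ) (s : Finset (Fin n)) :
    ∏ m ∈ s, (-l m) = (-1:ℝ)^s.card * ∏ m ∈ s, l m := by
  induction s using Finset.induction_on with
  | empty => simp
  | insert _ _ h ih =>
    rw [Finset.prod_insert h, Finset.prod_insert h, ih, Finset.card_insert_of_notMem h]
    ring

lemma prod_update_eval (n : ℕ) (l : Fin n → ℝ) (j : Fin n) (t : ℝ) (s : Finset (Fin n)) :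
    (∏ m ∈ s, Function.update l j t m) =
      if j ∈ s then t * ∏ m ∈ s.erase j, l m else ∏ m ∈ s, l m := by
  split_ifs with h
  · rw [← Finset.mul_prod_erase s _ h, Function.update_self]
    congr 1
    exact Finset.prod_congr rfl fun m hm =>
      Function.update_of_ne (Finset.ne_of_mem_erase hm) _ _
  · refine Finset.prod_congr rfl fun m hm => Function.update_of_ne (fun e => h ?_) _ _
    rwa [e] at hm

lemma filter_sum_erase (n k : ℕ) (l : Fin n → ℝ) (j : Fin n) :
    ∑ s ∈ (Finset.powersetCard (k+1) (Finset.univ : Finset (Fin n))).filter (fun s => j ∈ s),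
        ∏ m ∈ s.erase j, l m
      = ∑ s ∈ (Finset.univ.erase j).powersetCard k, ∏ m ∈ s, l m := by
  refine Finset.sum_nbij' (fun s => s.erase j) (fun s => insert j s) ?_ ?_ ?_ ?_ ?_
  · intro s hs
    rw [Finset.mem_filter, Finset.mem_powersetCard] at hs
    rw [Finset.mem_powersetCard]
    refine ⟨Finset.erase_subset_erase _ (Finset.subset_univ s), ?_⟩
    rw [Finset.card_erase_of_mem hs.2, hs.1.2]
    omega
  · intro s hs
    rw [Finset.mem_powersetCard] at hs
    have hj : j ∉ s := fun h => (Finset.ne_of_mem_erase (hs.1 h)) rfl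
    rw [Finset.mem_filter, Finset.mem_powersetCard]
    exact ⟨⟨Finset.subset_univ _, by rw [Finset.card_insert_of_notMem hj, hs.2]⟩,
      Finset.mem_insert_self _ _⟩
  · intro s hs
    rw [Finset.mem_filter] at hs
    exact Finset.insert_erase hs.2
  · intro s hs
    rw [Finset.mem_powersetCard] at hs
    exact Finset.erase_insert (fun h => (Finset.ne_of_mem_erase (hs.1 h)) rfl)
  · intro s _; rfl

lemma pd_rho (n k : ℕ) (l : Fin n → ℝ) (j : Fin n) :
    pd n (rho n (k+1)) l j =
      (-1)^(k+1) * ∑ s ∈ (Finset.univ.erase j).powersetCard k, ∏ m ∈ s, l m := by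
  set A : ℝ := (-1:ℝ)^(k+1) * ∑ s ∈ (Finset.univ.erase j).powersetCard k, ∏ m ∈ s, l m with hA
  set C : ℝ := (-1:ℝ)^(k+1) *
      ∑ s ∈ (Finset.powersetCard (k+1) (Finset.univ : Finset (Fin n))).filter
        (fun s => j ∉ s), ∏ m ∈ s, l m with hC
  have hfun : (fun t => rho n (k+1) (Function.update l j t)) = fun t => A * t + C := by
    funext t
    simp only [rho, esymmF]
    have h1 : ∑ s ∈ Finset.powersetCard (k+1) (Finset.univ : Finset (Fin n)),
        ∏ m ∈ s, Function.update l j t m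
        = (∑ s ∈ (Finset.powersetCard (k+1) (Finset.univ : Finset (Fin n))).filter
            (fun s => j ∈ s), t * ∏ m ∈ s.erase j, l m)
          + ∑ s ∈ (Finset.powersetCard (k+1) (Finset.univ : Finset (Fin n))).filter
            (fun s => j ∉ s), ∏ m ∈ s, l m := by
      rw [← Finset.sum_filter_add_sum_filter_not _ (fun s => j ∈ s)]
      congr 1
      · exact Finset.sum_congr rfl fun s hs => by
          rw [prod_update_eval, if_pos (Finset.mem_filter.mp hs).2]
      · exact Finset.sum_congr rfl fun s hs => by
          rw [prod_update_eval, if_neg (Finset.mem_filter.mp hs).2]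
    rw [h1, ← Finset.mul_sum, filter_sum_erase n k l j, hA, hC]
    ring
  have hder : HasDerivAt (fun t => rho n (k+1) (Function.update l j t)) A (l j) := by
    rw [hfun]
    simpa using ((hasDerivAt_id (l j)).const_mul A).add_const C
  rw [pd, hder.deriv]

lemma key_sum (n : ℕ) (l : Fin n → ℝ) (x : ℝ) (j : Fin n) :
    ∑ k : Fin n, x ^ (n - 1 - (k:ℕ)) * pd n (rho n ((k:ℕ)+1)) l j
      = - ∏ t ∈ Finset.univ.erase j, (x - l t) := by
  have hcard : ((Finset.univ : Finset (Fin n)).erase j).card = n - 1 := by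
    rw [Finset.card_erase_of_mem (Finset.mem_univ j), Finset.card_univ, Fintype.card_fin]
  have hprod : ∏ t ∈ Finset.univ.erase j, (x - l t)
      = ∑ k ∈ Finset.range n, (-1:ℝ)^k *
          (∑ s ∈ (Finset.univ.erase j).powersetCard k, ∏ m ∈ s, l m) * x ^ (n - 1 - k) := by
    have h0 : ∀ t : Fin n, x - l t = (-l t) + x := fun t => by ring
    calc ∏ t ∈ Finset.univ.erase j, (x - l t)
        = ∏ t ∈ Finset.univ.erase j, ((-l t) + x) := Finset.prod_congr rfl fun t _ => h0 t
      _ = ∑ s ∈ (Finset.univ.erase j).powerset,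
            (∏ m ∈ s, (-l m)) * ∏ _m ∈ (Finset.univ.erase j) \ s, x :=
          Finset.prod_add _ _ _
      _ = ∑ k ∈ Finset.range (n - 1 + 1), ∑ s ∈ (Finset.univ.erase j).powersetCard k,
            (∏ m ∈ s, (-l m)) * ∏ _m ∈ (Finset.univ.erase j) \ s, x := by
          rw [Finset.powerset_card_biUnion, Finset.sum_biUnion (fun a _ b _ hab => Finset.pairwise_disjoint_powersetCard _ hab), hcard]
      _ = ∑ k ∈ Finset.range n, (-1:ℝ)^k *
            (∑ s ∈ (Finset.univ.erase j).powersetCard k, ∏ m ∈ s, l m) * x ^ (n - 1 - k) := by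
          have hn : n - 1 + 1 ≤ n := by
            have := j.pos; omega
          have hn' : n ≤ n - 1 + 1 := by omega
          rw [le_antisymm hn hn']
          refine Finset.sum_congr rfl fun k _ => ?_
          rw [Finset.mul_sum, Finset.sum_mul]
          refine Finset.sum_congr rfl fun s hs => ?_
          rw [Finset.mem_powersetCard] at hs
          rw [Finset.prod_const, Finset.card_sdiff_of_subset hs.1, hcard, hs.2]
          rw [prod_neg_aux, hs.2]
  rw [hprod]
  rw [Fin.sum_univ_eq_sum_range
    (fun k => x ^ (n - 1 - k) * pd n (rho n (k+1)) l j) n, ← Finset.sum_neg_distrib]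
  refine Finset.sum_congr rfl fun k _ => ?_
  rw [pd_rho]
  ring

theorem stackel_vandermonde_inverse (n : ℕ) (l : Fin n → ℝ) (hl : Function.Injective l)
    (S : Matrix (Fin n) (Fin n) ℝ) (hS : ∀ i j, S i j = l i ^ (n - 1 - (j : ℕ))) :
    IsUnit S.det ∧
      ∀ i j, S⁻¹ i j = -(1 / Delta n l j) * pd n (rho n ((i : ℕ) + 1)) l j := by
  classical
  set B : Matrix (Fin n) (Fin n) ℝ :=
    fun i j => -(1 / Delta n l j) * pd n (rho n ((i : ℕ) + 1)) l j with hB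
  have hΔ : ∀ j, Delta n l j ≠ 0 := by
    intro j
    refine Finset.prod_ne_zero_iff.mpr fun k hk => sub_ne_zero.mpr ?_
    exact fun e => (Finset.ne_of_mem_erase hk) ((hl e).symm)
  have hSB : S * B = 1 := by
    ext i j
    rw [Matrix.mul_apply]
    have h1 : ∑ k, S i k * B k j
        = -(1 / Delta n l j) *
            ∑ k : Fin n, l i ^ (n - 1 - (k:ℕ)) * pd n (rho n ((k:ℕ)+1)) l j := by
      rw [Finset.mul_sum]
      refine Finset.sum_congr rfl fun k _ => ?_
      rw [hS, hB]
      ring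
    rw [h1, key_sum n l (l i) j]
    by_cases hij : i = j
    · subst hij
      have : ∏ t ∈ Finset.univ.erase i, (l i - l t) = Delta n l i := rfl
      rw [this, Matrix.one_apply_eq]
      field_simp
      exact div_self (hΔ i)
    · rw [Matrix.one_apply_ne hij]
      rw [Finset.prod_eq_zero (Finset.mem_erase.mpr ⟨hij, Finset.mem_univ i⟩) (sub_self (l i))]
      ring
  refine ⟨Matrix.isUnit_det_of_right_inverse hSB, fun i j => ?_⟩
  rw [Matrix.inv_eq_right_inv hSB]
end

section
/- Let λ_1, …, λ_n be pairwise distinct reals, and for m = n+1 let G_{n+1} = diag(λ_1^{n+1}/Δ_1, …, λ_n^{n+1}/Δ_n). Then in Viète coordinates q_i = (-1)^i σ_i(λ), the transformed matrix G_{n+1}(q) = J_V G_{n+1} J_V^T has entries G_{n+1}^{ij}(q) = q_i q_j − q_{i+j} for all i,j = 1,…,n, with the convention q_k = 0 for k > n. -/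
open Finset Polynomial

noncomputable def eJ (n : ℕ) (l : Fin n → ℝ) (j : Fin n) (u : ℕ) : ℝ :=
  ∑ s ∈ (Finset.univ.erase j).powersetCard u, ∏ i ∈ s, l i

noncomputable def HH (n : ℕ) (l : Fin n → ℝ) (m : ℕ) : ℝ :=
  ∑ j, l j ^ m / Delta n l j

variable {n : ℕ} (l : Fin n → ℝ)

lemma esymmF_zero : esymmF n 0 l = 1 := by simp [esymmF]

lemma esymmF_of_gt {u : ℕ} (h : n < u) : esymmF n u l = 0 := by
  rw [esymmF, Finset.powersetCard_eq_empty.2 (by simpa using h), Finset.sum_empty]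

lemma eJ_zero (j : Fin n) : eJ n l j 0 = 1 := by simp [eJ]

lemma npow_eq {a b : ℕ} (hab : a % 2 = b % 2) : (-1:ℝ)^a = (-1)^b := by
  rw [neg_one_pow_eq_pow_mod_two, hab, ← neg_one_pow_eq_pow_mod_two]

section split

variable (j : Fin n)

lemma univ_eq : (Finset.univ : Finset (Fin n)) = insert j (Finset.univ.erase j) :=
  (Finset.insert_erase (Finset.mem_univ j)).symm

lemma split_disj (m : ℕ) :
    Disjoint ((Finset.univ.erase j).powersetCard (m+1))
      (((Finset.univ.erase j).powersetCard m).image (insert j)) := by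
  rw [Finset.disjoint_left]
  intro s hs hs'
  rw [Finset.mem_powersetCard] at hs
  have hj : j ∉ s := fun hj => (Finset.mem_erase.1 (hs.1 hj)).1 rfl
  obtain ⟨t, ht, rfl⟩ := Finset.mem_image.1 hs'
  exact hj (Finset.mem_insert_self _ _)

lemma split_inj (m : ℕ) : Set.InjOn (insert j) ((((Finset.univ.erase j).powersetCard m) : Finset (Finset (Fin n))) : Set (Finset (Fin n))) := by
  intro s hs t ht hst
  rw [Finset.mem_coe, Finset.mem_powersetCard] at hs ht
  have hjs : j ∉ s := fun h => (Finset.mem_erase.1 (hs.1 h)).1 rfl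
  have hjt : j ∉ t := fun h => (Finset.mem_erase.1 (ht.1 h)).1 rfl
  rw [← Finset.erase_insert hjs, ← Finset.erase_insert hjt, hst]

lemma esymm_split (m : ℕ) :
    esymmF n (m+1) l = eJ n l j (m+1) + l j * eJ n l j m := by
  rw [esymmF, univ_eq j, Finset.powersetCard_succ_insert (Finset.notMem_erase j _),
    Finset.sum_union (split_disj j m), Finset.sum_image (split_inj j m)]
  congr 1
  rw [eJ, Finset.mul_sum]
  refine Finset.sum_congr rfl fun s hs => ?_
  rw [Finset.mem_powersetCard] at hs
  have hjs : j ∉ s := fun h => (Finset.mem_erase.1 (hs.1 h)).1 rfl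
  rw [Finset.prod_insert hjs]

lemma esymmF_update (i : ℕ) (t : ℝ) :
    esymmF n (i+1) (Function.update l j t) =
      (∑ s ∈ (Finset.univ.erase j).powersetCard (i+1), ∏ x ∈ s, l x) + t * eJ n l j i := by
  have hupd : ∀ s : Finset (Fin n), j ∉ s →
      (∏ x ∈ s, Function.update l j t x) = ∏ x ∈ s, l x := by
    intro s hjs
    exact Finset.prod_congr rfl fun x hx => Function.update_of_ne (by rintro rfl; exact hjs hx) _ _
  conv_lhs => rw [esymmF, univ_eq j, Finset.powersetCard_succ_insert (Finset.notMem_erase j _)]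
  rw [Finset.sum_union (split_disj j i), Finset.sum_image (split_inj j i)]
  congr 1
  · refine Finset.sum_congr rfl fun s hs => ?_
    rw [Finset.mem_powersetCard] at hs
    exact hupd s (fun h => (Finset.mem_erase.1 (hs.1 h)).1 rfl)
  · rw [eJ, Finset.mul_sum]
    refine Finset.sum_congr rfl fun s hs => ?_
    rw [Finset.mem_powersetCard] at hs
    have hjs : j ∉ s := fun h => (Finset.mem_erase.1 (hs.1 h)).1 rfl
    rw [Finset.prod_insert hjs, hupd s hjs, Function.update_self]

lemma pd_rho_s12 (i : ℕ) : pd n (rho n (i+1)) l j = (-1)^(i+1) * eJ n l j i := by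
  have hfun : (fun t => rho n (i+1) (Function.update l j t)) =
      fun t => ((-1:ℝ)^(i+1) * eJ n l j i) * t +
        (-1)^(i+1) * (∑ s ∈ (Finset.univ.erase j).powersetCard (i+1), ∏ x ∈ s, l x) := by
    funext t
    rw [rho, esymmF_update l j i t]
    ring
  rw [pd, hfun]
  have h := ((hasDerivAt_id (l j)).const_mul ((-1:ℝ)^(i+1) * eJ n l j i)).add_const
    ((-1:ℝ)^(i+1) * (∑ s ∈ (Finset.univ.erase j).powersetCard (i+1), ∏ x ∈ s, l x))
  simpa using h.deriv

lemma eJ_eq (m : ℕ) :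
    eJ n l j m = ∑ u ∈ Finset.range (m+1), (-1:ℝ)^(m-u) * l j^(m-u) * esymmF n u l := by
  induction m with
  | zero => simp [eJ_zero, esymmF_zero]
  | succ m ih =>
    have h := esymm_split l j m
    have h2 : eJ n l j (m+1) = esymmF n (m+1) l - l j * eJ n l j m := by rw [h]; ring
    rw [h2, ih, Finset.mul_sum]
    conv_rhs => rw [Finset.sum_range_succ]
    have h3 : ∀ u ∈ Finset.range (m+1),
        (-1:ℝ)^(m+1-u) * l j^(m+1-u) * esymmF n u l =
          -(l j * ((-1)^(m-u) * l j^(m-u) * esymmF n u l)) := by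
      intro u hu
      rw [Finset.mem_range] at hu
      rw [show m+1-u = (m-u)+1 by omega, pow_succ, pow_succ]
      ring
    rw [Finset.sum_congr rfl h3, Finset.sum_neg_distrib]
    simp only [Nat.sub_self, pow_zero, one_mul]
    ring

end split

section part2

variable {n : ℕ} (l : Fin n → ℝ)


lemma vieta_at_root (j : Fin n) :
    ∑ r ∈ Finset.range (n+1), (-1:ℝ)^r * esymmF n r l * (l j)^(n-r) = 0 := by
  classical
  set P : ℝ[X] := ∏ k : Fin n, (X + C (-(l k))) with hP
  have hmon : ∀ k ∈ (Finset.univ : Finset (Fin n)), (X + C (-(l k))).Monic :=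
    fun k _ => monic_X_add_C _
  have hdeg : P.natDegree = n := by
    rw [hP, Polynomial.natDegree_prod_of_monic _ _ hmon]
    have : ∀ x : Fin n, (X + -C (l x)).natDegree = 1 := by
      intro x
      rw [← Polynomial.C_neg]
      exact Polynomial.natDegree_X_add_C _
    simp [this]
  have heval : P.eval (l j) = 0 := by
    rw [hP, Polynomial.eval_prod]
    refine Finset.prod_eq_zero (Finset.mem_univ j) ?_
    simp
  have hcoeff : ∀ m, m ≤ n → P.coeff m = (-1:ℝ)^(n-m) * esymmF n (n-m) l := by
    intro m hm
    rw [hP, Finset.prod_X_add_C_coeff (Finset.univ : Finset (Fin n)) (fun k => -(l k))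
      (by simpa using hm)]
    have hcard : #(Finset.univ : Finset (Fin n)) = n := by simp
    rw [hcard, esymmF, Finset.mul_sum]
    refine Finset.sum_congr rfl fun t ht => ?_
    rw [Finset.mem_powersetCard] at ht
    calc ∏ i ∈ t, -l i = ∏ i ∈ t, (-1 : ℝ) * l i := by simp
      _ = (∏ _i ∈ t, (-1:ℝ)) * ∏ i ∈ t, l i := Finset.prod_mul_distrib
      _ = (-1:ℝ)^(n-m) * ∏ i ∈ t, l i := by rw [Finset.prod_const, ht.2]
  have h := heval
  rw [Polynomial.eval_eq_sum_range' (by omega : P.natDegree < n + 1)] at h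
  rw [← Finset.sum_range_reflect] at h
  rw [← h]
  refine Finset.sum_congr rfl fun r hr => ?_
  rw [Finset.mem_range] at hr
  rw [show n + 1 - 1 - r = n - r by omega, hcoeff (n - r) (by omega),
    show n - (n - r) = r by omega]

lemma coeff_basis (hl : Function.Injective l) (j : Fin n) :
    (Lagrange.basis Finset.univ l j).coeff (n-1) = (Delta n l j)⁻¹ := by
  classical
  have hcard : #(Finset.univ.erase j) = n - 1 := by
    rw [Finset.card_erase_of_mem (Finset.mem_univ j)]; simp
  have hsplit : Lagrange.basis Finset.univ l j =
      C (∏ k ∈ Finset.univ.erase j, (l j - l k)⁻¹) *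
        ∏ k ∈ Finset.univ.erase j, (X - C (l k)) := by
    rw [Lagrange.basis, map_prod, ← Finset.prod_mul_distrib]
    exact Finset.prod_congr rfl fun k _ => rfl
  have hmon : ∀ k ∈ Finset.univ.erase j, (X - C (l k)).Monic := fun k _ => monic_X_sub_C _
  have hdeg : (∏ k ∈ Finset.univ.erase j, (X - C (l k))).natDegree = n - 1 := by
    rw [Polynomial.natDegree_prod_of_monic _ _ hmon]
    simp [hcard]
  have hlead : (∏ k ∈ Finset.univ.erase j, (X - C (l k))).coeff (n-1) = 1 := by
    rw [← hdeg]
    exact (Polynomial.monic_prod_of_monic _ _ hmon).coeff_natDegree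
  rw [hsplit, Polynomial.coeff_C_mul, hlead, mul_one, Finset.prod_inv_distrib, Delta]

lemma HH_small (hl : Function.Injective l) (m : ℕ) (hm : m < n) :
    HH n l m = if m = n - 1 then 1 else 0 := by
  classical
  have hinj : Set.InjOn l ↑(Finset.univ : Finset (Fin n)) := hl.injOn
  have hcard : #(Finset.univ : Finset (Fin n)) = n := by simp
  have hXm : (X ^ m : ℝ[X]) =
      Lagrange.interpolate Finset.univ l (fun j => (X ^ m : ℝ[X]).eval (l j)) := by
    refine Lagrange.eq_interpolate hinj ?_
    rw [Polynomial.degree_X_pow, hcard]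
    exact_mod_cast hm
  have h := congrArg (fun p : ℝ[X] => p.coeff (n-1)) hXm
  simp only [Polynomial.coeff_X_pow] at h
  rw [Lagrange.interpolate_apply, Polynomial.finset_sum_coeff] at h
  have h2 : ∀ j ∈ (Finset.univ : Finset (Fin n)),
      (C ((X ^ m : ℝ[X]).eval (l j)) * Lagrange.basis Finset.univ l j).coeff (n-1)
        = l j ^ m / Delta n l j := by
    intro j _
    rw [Polynomial.coeff_C_mul, coeff_basis l hl j]
    simp [div_eq_mul_inv]
  rw [Finset.sum_congr rfl h2] at h
  rw [HH, ← h]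
  by_cases hmn : m = n - 1
  · rw [if_pos hmn, if_pos (by omega)]
  · rw [if_neg hmn, if_neg (by omega)]

lemma pow_n_eq (j : Fin n) :
    l j ^ n = ∑ r ∈ Finset.range n, (-1:ℝ)^r * esymmF n (r+1) l * l j^(n-(r+1)) := by
  have h := vieta_at_root l j
  rw [Finset.sum_range_succ'] at h
  have h3 : ∀ i ∈ Finset.range n,
      (-1:ℝ)^(i+1) * esymmF n (i+1) l * l j^(n-(i+1)) =
        -((-1)^i * esymmF n (i+1) l * l j^(n-(i+1))) := by
    intro i _
    rw [pow_succ]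
    ring
  rw [Finset.sum_congr rfl h3, Finset.sum_neg_distrib] at h
  rw [esymmF_zero] at h
  simp only [pow_zero, one_mul, Nat.sub_zero] at h
  linarith

lemma HH_rec (m : ℕ) :
    HH n l (n + m) = ∑ r ∈ Finset.range n,
      (-1:ℝ)^r * esymmF n (r+1) l * HH n l (n + m - (r+1)) := by
  rw [HH]
  have h1 : ∀ j : Fin n, l j ^ (n + m) / Delta n l j =
      ∑ r ∈ Finset.range n,
        (-1:ℝ)^r * esymmF n (r+1) l * (l j ^ (n + m - (r+1)) / Delta n l j) := by
    intro j
    rw [pow_add, pow_n_eq l j, Finset.sum_mul, Finset.sum_div]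
    refine Finset.sum_congr rfl fun r hr => ?_
    rw [Finset.mem_range] at hr
    rw [show n + m - (r+1) = (n - (r+1)) + m by omega, pow_add]
    ring
  rw [Finset.sum_congr rfl (fun j _ => h1 j), Finset.sum_comm]
  refine Finset.sum_congr rfl fun r _ => ?_
  rw [HH, Finset.mul_sum]

lemma hC (hl : Function.Injective l) (hn : 1 ≤ n) (t : ℕ) (ht : 1 ≤ t) :
    ∑ u ∈ Finset.range (t+1),
      (-1:ℝ)^u * esymmF n u l * HH n l (n - 1 + (t - u)) = 0 := by
  rw [Finset.sum_range_succ']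
  simp only [pow_zero, one_mul, Nat.sub_zero, esymmF_zero]
  -- goal : ∑ u ∈ range t, (-1)^(u+1) * e (u+1) * HH (n-1+(t-(u+1))) + HH (n-1+t) = 0
  have hrec := HH_rec l (t - 1)
  rw [show n + (t-1) = n - 1 + t by omega] at hrec
  -- common form
  set M := max t n with hM
  have hL : ∑ u ∈ Finset.range t,
      (-1:ℝ)^(u+1) * esymmF n (u+1) l * HH n l (n - 1 + (t - (u+1)))
      = ∑ u ∈ Finset.range M,
        (-1:ℝ)^(u+1) * esymmF n (u+1) l * HH n l (n + t - 2 - u) := by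
    have step1 : ∑ u ∈ Finset.range t,
        (-1:ℝ)^(u+1) * esymmF n (u+1) l * HH n l (n - 1 + (t - (u+1)))
        = ∑ u ∈ Finset.range t,
          (-1:ℝ)^(u+1) * esymmF n (u+1) l * HH n l (n + t - 2 - u) := by
      refine Finset.sum_congr rfl fun u hu => ?_
      rw [Finset.mem_range] at hu
      rw [show n - 1 + (t - (u+1)) = n + t - 2 - u by omega]
    rw [step1]
    refine Finset.sum_subset (Finset.range_subset_range.2 (le_max_left t n)) ?_
    intro u hu hu'
    rw [Finset.mem_range] at hu hu'
    push_neg at hu'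
    by_cases hun : n < u + 1
    · rw [esymmF_of_gt l hun]
      ring
    · rw [HH_small l hl (n + t - 2 - u) (by omega), if_neg (by omega)]
      ring
  have hR : ∑ r ∈ Finset.range n,
      (-1:ℝ)^r * esymmF n (r+1) l * HH n l (n - 1 + t - (r+1))
      = ∑ r ∈ Finset.range M,
        (-1:ℝ)^r * esymmF n (r+1) l * HH n l (n + t - 2 - r) := by
    have step1 : ∑ r ∈ Finset.range n,
        (-1:ℝ)^r * esymmF n (r+1) l * HH n l (n - 1 + t - (r+1))
        = ∑ r ∈ Finset.range n,
          (-1:ℝ)^r * esymmF n (r+1) l * HH n l (n + t - 2 - r) := by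
      refine Finset.sum_congr rfl fun r hr => ?_
      rw [Finset.mem_range] at hr
      rw [show n - 1 + t - (r+1) = n + t - 2 - r by omega]
    rw [step1]
    refine Finset.sum_subset (Finset.range_subset_range.2 (le_max_right t n)) ?_
    intro r hr hr'
    rw [Finset.mem_range] at hr hr'
    push_neg at hr'
    rw [esymmF_of_gt l (by omega)]
    ring
  rw [hL, hrec, hR]
  have : ∀ u ∈ Finset.range M,
      (-1:ℝ)^(u+1) * esymmF n (u+1) l * HH n l (n + t - 2 - u)
        = -((-1)^u * esymmF n (u+1) l * HH n l (n + t - 2 - u)) := by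
    intro u _
    rw [pow_succ]; ring
  rw [Finset.sum_congr rfl this, Finset.sum_neg_distrib]
  ring

end part2


lemma triangle_swap (N : ℕ) (f : ℕ → ℕ → ℝ) :
    ∑ v ∈ Finset.range N, ∑ w ∈ Finset.range (N - v), f v w
      = ∑ w ∈ Finset.range N, ∑ v ∈ Finset.range (N - w), f v w := by
  rw [Finset.sum_sigma', Finset.sum_sigma']
  refine Finset.sum_bij' (fun p _ => ⟨p.2, p.1⟩) (fun p _ => ⟨p.2, p.1⟩) ?_ ?_ ?_ ?_ ?_
  · intro p hp
    simp only [Finset.mem_sigma, Finset.mem_range] at hp ⊢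
    omega
  · intro p hp
    simp only [Finset.mem_sigma, Finset.mem_range] at hp ⊢
    omega
  · intro p _; rfl
  · intro p _; rfl
  · intro p _; rfl

lemma key (e h : ℕ → ℝ) (he0 : e 0 = 1) (hh0 : h 0 = 1)
    (hC : ∀ t, 1 ≤ t → ∑ u ∈ Finset.range (t+1), (-1:ℝ)^u * e u * h (t-u) = 0)
    (i k : ℕ) :
    ∑ u ∈ Finset.range (i+1), ∑ v ∈ Finset.range (k+1),
        (-1:ℝ)^(u+v) * e u * e v * h (i+k+2-u-v)
      = (-1:ℝ)^(i+k) * (e (i+1) * e (k+1) - e (i+k+2)) := by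
  have step1 : ∀ v, v ≤ k →
      ∑ u ∈ Finset.range (i+1), (-1:ℝ)^u * e u * h (i+k+2-v-u)
        = -∑ w ∈ Finset.range (k+2-v), (-1:ℝ)^(i+1+w) * e (i+1+w) * h (k+1-v-w) := by
    intro v hv
    have h0' := hC (i+k+2-v) (by omega)
    rw [show (i+k+2-v)+1 = (i+1) + (k+2-v) by omega, Finset.sum_range_add] at h0'
    have h1 : ∑ w ∈ Finset.range (k+2-v),
        (-1:ℝ)^(i+1+w) * e (i+1+w) * h (i+k+2-v-(i+1+w))
        = ∑ w ∈ Finset.range (k+2-v), (-1:ℝ)^(i+1+w) * e (i+1+w) * h (k+1-v-w) := by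
      refine Finset.sum_congr rfl fun w hw => ?_
      rw [show i+k+2-v-(i+1+w) = k+1-v-w by omega]
    rw [h1] at h0'
    linarith
  -- swap and factor
  have step2 : ∑ u ∈ Finset.range (i+1), ∑ v ∈ Finset.range (k+1),
      (-1:ℝ)^(u+v) * e u * e v * h (i+k+2-u-v)
      = ∑ v ∈ Finset.range (k+1), (-1:ℝ)^v * e v *
          ∑ u ∈ Finset.range (i+1), (-1:ℝ)^u * e u * h (i+k+2-v-u) := by
    rw [Finset.sum_comm]
    refine Finset.sum_congr rfl fun v hv => ?_
    rw [Finset.mul_sum]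
    refine Finset.sum_congr rfl fun u hu => ?_
    rw [show i+k+2-u-v = i+k+2-v-u by omega, pow_add]
    ring
  rw [step2]
  have step3 : ∑ v ∈ Finset.range (k+1), (-1:ℝ)^v * e v *
      ∑ u ∈ Finset.range (i+1), (-1:ℝ)^u * e u * h (i+k+2-v-u)
      = (-1:ℝ)^i * ∑ v ∈ Finset.range (k+1), ∑ w ∈ Finset.range (k+2-v),
          (-1:ℝ)^(v+w) * e v * e (i+1+w) * h (k+1-v-w) := by
    rw [Finset.mul_sum]
    refine Finset.sum_congr rfl fun v hv => ?_
    rw [Finset.mem_range] at hv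
    rw [step1 v (by omega)]
    rw [mul_neg]
    rw [Finset.mul_sum]
    rw [show -∑ w ∈ Finset.range (k+2-v),
        (-1:ℝ)^v * e v * ((-1)^(i+1+w) * e (i+1+w) * h (k+1-v-w))
        = ∑ w ∈ Finset.range (k+2-v),
          -((-1:ℝ)^v * e v * ((-1)^(i+1+w) * e (i+1+w) * h (k+1-v-w)))
      by rw [Finset.sum_neg_distrib]]
    rw [Finset.mul_sum]
    refine Finset.sum_congr rfl fun w hw => ?_
    rw [pow_add, pow_add, pow_add, pow_succ]
    ring
  rw [step3]
  -- extend v-range to k+2 : triangle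
  have step4 : ∑ v ∈ Finset.range (k+2), ∑ w ∈ Finset.range (k+2-v),
      (-1:ℝ)^(v+w) * e v * e (i+1+w) * h (k+1-v-w)
      = (∑ v ∈ Finset.range (k+1), ∑ w ∈ Finset.range (k+2-v),
          (-1:ℝ)^(v+w) * e v * e (i+1+w) * h (k+1-v-w))
        + (-1:ℝ)^(k+1) * e (k+1) * e (i+1) := by
    rw [Finset.sum_range_succ]
    congr 1
    rw [show k+2-(k+1) = 1 by omega, Finset.sum_range_one]
    rw [show k+1-(k+1)-0 = 0 by omega, hh0]
    ring
  have step5 : ∑ v ∈ Finset.range (k+2), ∑ w ∈ Finset.range (k+2-v),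
      (-1:ℝ)^(v+w) * e v * e (i+1+w) * h (k+1-v-w)
      = (-1:ℝ)^(k+1) * e (i+k+2) := by
    rw [triangle_swap]
    rw [Finset.sum_range_succ]
    have hzero : ∑ w ∈ Finset.range (k+1), ∑ v ∈ Finset.range (k+2-w),
        (-1:ℝ)^(v+w) * e v * e (i+1+w) * h (k+1-v-w) = 0 := by
      refine Finset.sum_eq_zero fun w hw => ?_
      rw [Finset.mem_range] at hw
      have hin : ∑ v ∈ Finset.range (k+2-w),
          (-1:ℝ)^(v+w) * e v * e (i+1+w) * h (k+1-v-w)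
          = (-1:ℝ)^w * e (i+1+w) *
            ∑ v ∈ Finset.range ((k+1-w)+1), (-1:ℝ)^v * e v * h ((k+1-w)-v) := by
        rw [Finset.mul_sum, show (k+1-w)+1 = k+2-w by omega]
        refine Finset.sum_congr rfl fun v hv => ?_
        rw [show k+1-v-w = k+1-w-v by omega, pow_add]
        ring
      rw [hin, hC (k+1-w) (by omega), mul_zero]
    rw [hzero, zero_add]
    rw [show k+2-(k+1) = 1 by omega, Finset.sum_range_one]
    rw [show k+1-0-(k+1) = 0 by omega, hh0, he0]
    rw [show i+1+(k+1) = i+k+2 by omega]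
    ring
  have hfin : ∑ v ∈ Finset.range (k+1), ∑ w ∈ Finset.range (k+2-v),
      (-1:ℝ)^(v+w) * e v * e (i+1+w) * h (k+1-v-w)
      = (-1:ℝ)^(k+1) * e (i+k+2) - (-1:ℝ)^(k+1) * e (k+1) * e (i+1) := by
    rw [← step5, step4]; ring
  rw [hfin, pow_add, pow_succ]
  ring


section entry

variable {n : ℕ} (l : Fin n → ℝ)

lemma entry_eq (hn : 1 ≤ n) (i k : ℕ) :
    ∑ j, ((-1:ℝ)^(i+1) * eJ n l j i) * (l j^(n+1) / Delta n l j) *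
        ((-1:ℝ)^(k+1) * eJ n l j k)
      = ∑ u ∈ Finset.range (i+1), ∑ v ∈ Finset.range (k+1),
          (-1:ℝ)^(u+v) * esymmF n u l * esymmF n v l * HH n l (n-1+(i+k+2-u-v)) := by
  have hptw : ∀ j : Fin n,
      ((-1:ℝ)^(i+1) * eJ n l j i) * (l j^(n+1) / Delta n l j) *
          ((-1:ℝ)^(k+1) * eJ n l j k)
        = ∑ u ∈ Finset.range (i+1), ∑ v ∈ Finset.range (k+1),
            (-1:ℝ)^(u+v) * esymmF n u l * esymmF n v l *
              (l j^(n-1+(i+k+2-u-v)) / Delta n l j) := by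
    intro j
    rw [eJ_eq l j i, eJ_eq l j k]
    calc ((-1:ℝ)^(i+1) * ∑ u ∈ Finset.range (i+1),
            (-1:ℝ)^(i-u) * l j^(i-u) * esymmF n u l) * (l j^(n+1) / Delta n l j) *
          ((-1:ℝ)^(k+1) * ∑ v ∈ Finset.range (k+1),
            (-1:ℝ)^(k-v) * l j^(k-v) * esymmF n v l)
        = (∑ u ∈ Finset.range (i+1), (-1:ℝ)^(i-u) * l j^(i-u) * esymmF n u l) *
            (∑ v ∈ Finset.range (k+1), (-1:ℝ)^(k-v) * l j^(k-v) * esymmF n v l) *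
            ((-1:ℝ)^(i+1) * (-1:ℝ)^(k+1) * (l j^(n+1) / Delta n l j)) := by ring
      _ = (∑ u ∈ Finset.range (i+1), ∑ v ∈ Finset.range (k+1),
            ((-1:ℝ)^(i-u) * l j^(i-u) * esymmF n u l) *
              ((-1:ℝ)^(k-v) * l j^(k-v) * esymmF n v l)) *
            ((-1:ℝ)^(i+1) * (-1:ℝ)^(k+1) * (l j^(n+1) / Delta n l j)) := by
          rw [Finset.sum_mul_sum]
      _ = ∑ u ∈ Finset.range (i+1), ∑ v ∈ Finset.range (k+1),
            ((-1:ℝ)^(i-u) * l j^(i-u) * esymmF n u l) *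
              ((-1:ℝ)^(k-v) * l j^(k-v) * esymmF n v l) *
              ((-1:ℝ)^(i+1) * (-1:ℝ)^(k+1) * (l j^(n+1) / Delta n l j)) := by
          rw [Finset.sum_mul]
          exact Finset.sum_congr rfl fun u _ => by rw [Finset.sum_mul]
      _ = ∑ u ∈ Finset.range (i+1), ∑ v ∈ Finset.range (k+1),
            (-1:ℝ)^(u+v) * esymmF n u l * esymmF n v l *
              (l j^(n-1+(i+k+2-u-v)) / Delta n l j) := by
          refine Finset.sum_congr rfl fun u hu => Finset.sum_congr rfl fun v hv => ?_
          rw [Finset.mem_range] at hu hv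
          have hs : (-1:ℝ)^(i-u) * (-1:ℝ)^(k-v) * ((-1:ℝ)^(i+1) * (-1:ℝ)^(k+1))
              = (-1:ℝ)^(u+v) := by
            rw [← pow_add, ← pow_add, ← pow_add]
            exact npow_eq (by omega)
          have hp : l j^(i-u) * l j^(k-v) * l j^(n+1) = l j^(n-1+(i+k+2-u-v)) := by
            rw [← pow_add, ← pow_add]
            congr 1
            omega
          calc ((-1:ℝ)^(i-u) * l j^(i-u) * esymmF n u l) *
                ((-1:ℝ)^(k-v) * l j^(k-v) * esymmF n v l) *
                ((-1:ℝ)^(i+1) * (-1:ℝ)^(k+1) * (l j^(n+1) / Delta n l j))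
              = ((-1:ℝ)^(i-u) * (-1:ℝ)^(k-v) * ((-1:ℝ)^(i+1) * (-1:ℝ)^(k+1))) *
                (esymmF n u l * esymmF n v l) *
                ((l j^(i-u) * l j^(k-v) * l j^(n+1)) / Delta n l j) := by ring
            _ = (-1:ℝ)^(u+v) * esymmF n u l * esymmF n v l *
                (l j^(n-1+(i+k+2-u-v)) / Delta n l j) := by rw [hs, hp]; ring
  rw [Finset.sum_congr rfl fun j _ => hptw j]
  rw [Finset.sum_comm]
  refine Finset.sum_congr rfl fun u _ => ?_
  rw [Finset.sum_comm]
  refine Finset.sum_congr rfl fun v _ => ?_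
  rw [HH, Finset.mul_sum]

end entry

theorem metric_Gnp1_in_viete (n : ℕ) (l : Fin n → ℝ) (hl : Function.Injective l)
    (JV : Matrix (Fin n) (Fin n) ℝ)
    (hJV : ∀ i j, JV i j = pd n (rho n ((i : ℕ) + 1)) l j) :
    JV * Matrix.diagonal (fun i => l i ^ (n + 1) / Delta n l i) * JV.transpose =
      Matrix.of (fun i j : Fin n =>
        rho n ((i : ℕ) + 1) l * rho n ((j : ℕ) + 1) l -
          (if (i : ℕ) + (j : ℕ) + 2 ≤ n then rho n ((i : ℕ) + (j : ℕ) + 2) l else 0)) := by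
  rcases Nat.eq_zero_or_pos n with hn0 | hn
  · subst hn0
    ext i j
    exact i.elim0
  ext i k
  have hL : (JV * Matrix.diagonal (fun i => l i ^ (n + 1) / Delta n l i) * JV.transpose) i k
      = ∑ j, ((-1:ℝ)^((i:ℕ)+1) * eJ n l j (i:ℕ)) * (l j^(n+1) / Delta n l j) *
          ((-1:ℝ)^((k:ℕ)+1) * eJ n l j (k:ℕ)) := by
    rw [Matrix.mul_apply]
    simp only [Matrix.mul_diagonal, Matrix.transpose_apply]
    refine Finset.sum_congr rfl fun j _ => ?_
    rw [hJV i j, hJV k j, pd_rho_s12 l j (i:ℕ), pd_rho_s12 l j (k:ℕ)]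
  have he0 : esymmF n 0 l = 1 := esymmF_zero l
  have hh0 : HH n l (n - 1 + 0) = 1 := by
    rw [Nat.add_zero, HH_small l hl (n-1) (by omega), if_pos rfl]
  have hC' := hC l hl hn
  have hkey := key (fun u => esymmF n u l) (fun t => HH n l (n - 1 + t)) he0 hh0 hC'
    (i:ℕ) (k:ℕ)
  rw [hL, entry_eq l hn (i:ℕ) (k:ℕ), hkey, Matrix.of_apply]
  rw [rho, rho]
  have hiks : (-1:ℝ)^((i:ℕ)+1) * (-1:ℝ)^((k:ℕ)+1) = (-1:ℝ)^((i:ℕ)+(k:ℕ)) := by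
    rw [← pow_add]
    exact npow_eq (by omega)
  by_cases hik : (i:ℕ) + (k:ℕ) + 2 ≤ n
  · rw [if_pos hik, rho]
    have h2 : (-1:ℝ)^((i:ℕ)+(k:ℕ)+2) = (-1:ℝ)^((i:ℕ)+(k:ℕ)) := npow_eq (by omega)
    rw [h2]
    linear_combination hiks * (esymmF n ((i:ℕ)+1) l * esymmF n ((k:ℕ)+1) l)
  · rw [if_neg hik]
    rw [esymmF_of_gt l (show n < (i:ℕ)+(k:ℕ)+2 by omega)]
    linear_combination hiks * (esymmF n ((i:ℕ)+1) l * esymmF n ((k:ℕ)+1) l)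
end
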